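/- If m is a nonnegative integer and c is a rational number with c ≠ 10 satisfying m = c(5c+22)/(10-c), then there exists a nonnegative integer s with s² = m² + 244m + 484, i.e. s² + 120² = (m+122)². -/

import Mathlib

/-! Clearing the denominator turns the hypothesis into the quadratic equation
`5c² + (22 + m)c - 10m = 0` with rational root `c`. Its discriminant `m² + 244m + 484` is then
the square `(10c + 22 + m)²` of a rational number, and an integer that is a rational square is
an integer square. -/

theorem Rat.isSquare_discrim_of_quadratic_eq_zero {a b c : ℤ} {x : ℚ}
    (h : a * (x * x) + b * x + c = 0) : IsSquare (discrim a b c) := by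
  rw [← Rat.isSquare_intCast_iff]
  refine ⟨2 * a * x + b, ?_⟩
  push_cast [discrim]
  rw [← discrim, discrim_eq_sq_of_quadratic_eq_zero h, sq]

/-- If `m` is a nonnegative integer and `c ≠ 10` is rational with
`m = c(5c+22)/(10-c)`, then the discriminant quantity `m² + 244m + 484`
is a perfect square `s²`, i.e. `s² + 120² = (m+122)²`. -/
theorem discriminant_is_square (m : ℕ) (c : ℚ) (hc : c ≠ 10)
    (h : (m : ℚ) = c * (5 * c + 22) / (10 - c)) :
    ∃ s : ℕ, s ^ 2 = m ^ 2 + 244 * m + 484 ∧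
      s ^ 2 + 120 ^ 2 = (m + 122) ^ 2 := by
  have hden : (10 : ℚ) - c ≠ 0 := sub_ne_zero.mpr hc.symm
  have hroot : ((5 : ℤ) : ℚ) * (c * c) + ((22 + m : ℤ) : ℚ) * c + ((-10 * m : ℤ) : ℚ) = 0 := by
    rw [eq_div_iff hden] at h
    push_cast
    linear_combination -h
  have hdiscrim : discrim (5 : ℤ) (22 + m) (-10 * m) = ((m ^ 2 + 244 * m + 484 : ℕ) : ℤ) := by
    rw [discrim]
    push_cast
    ring
  obtain ⟨s, hs⟩ := Int.isSquare_natCast_iff.mp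
    (hdiscrim ▸ Rat.isSquare_discrim_of_quadratic_eq_zero hroot)
  exact ⟨s, by rw [sq, hs], by rw [sq, ← hs]; ring⟩
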